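/- arXiv:2208.01865 — 3 statements merged into one kernel-verified Lean document; each statement's English description precedes it below -/
import Mathlib

section
/- Let n ≥ 3 be a natural number and let R > 0 and s > 0 be real numbers. Then ∫₀^R r^(n+1) cos(2 s r²) dr ≥ (Rⁿ/(4s)) · sin(2 s R²) + (n R^(n-2)/(16 s²)) · cos(2 s R²) - n R^(n-2)/(16 s²). -/
/-!
Integrating by parts twice against `d/dx sin (a x²) = 2 a x cos (a x²)` lowers the exponent by four:
`∫₀^R x^(m+4) cos (a x²)` equals explicit boundary terms minus `(m+3)(m+1)/(4a²) ∫₀^R x^m cos (a x²)`,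
and since `cos ≤ 1` the remaining integral is at most `∫₀^R x^m = R^(m+1)/(m+1)`.
-/

open Real intervalIntegral

theorem hasDerivAt_pow_succ_mul_sin_mul_sq (k : ℕ) (a x : ℝ) :
    HasDerivAt (fun x : ℝ => x ^ (k + 1) * sin (a * x ^ 2))
      ((k + 1) * (x ^ k * sin (a * x ^ 2)) + 2 * a * (x ^ (k + 2) * cos (a * x ^ 2))) x := by
  refine ((hasDerivAt_pow (k + 1) x).fun_mul
    (((hasDerivAt_pow 2 x).const_mul a).sin)).congr_deriv ?_
  simp only [Nat.add_sub_cancel, Nat.cast_add, Nat.cast_one, Nat.cast_ofNat]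
  ring

theorem hasDerivAt_pow_succ_mul_cos_mul_sq (k : ℕ) (a x : ℝ) :
    HasDerivAt (fun x : ℝ => x ^ (k + 1) * cos (a * x ^ 2))
      ((k + 1) * (x ^ k * cos (a * x ^ 2)) - 2 * a * (x ^ (k + 2) * sin (a * x ^ 2))) x := by
  refine ((hasDerivAt_pow (k + 1) x).fun_mul
    (((hasDerivAt_pow 2 x).const_mul a).cos)).congr_deriv ?_
  simp only [Nat.add_sub_cancel, Nat.cast_add, Nat.cast_one, Nat.cast_ofNat]
  ring

section IntegrationByParts

variable {k : ℕ} {a : ℝ}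

theorem integral_pow_mul_cos_mul_sq (ha : a ≠ 0) (R : ℝ) :
    ∫ x in (0 : ℝ)..R, x ^ (k + 2) * cos (a * x ^ 2) =
      R ^ (k + 1) * sin (a * R ^ 2) / (2 * a) -
        (k + 1) / (2 * a) * ∫ x in (0 : ℝ)..R, x ^ k * sin (a * x ^ 2) := by
  have h := integral_eq_sub_of_hasDerivAt (a := 0) (b := R)
    (fun x _ => hasDerivAt_pow_succ_mul_sin_mul_sq k a x)
    (by apply Continuous.intervalIntegrable; fun_prop)
  rw [integral_add (by apply Continuous.intervalIntegrable; fun_prop)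
      (by apply Continuous.intervalIntegrable; fun_prop),
    integral_const_mul, integral_const_mul, zero_pow k.succ_ne_zero, zero_mul, sub_zero] at h
  field_simp
  linear_combination h

theorem integral_pow_mul_sin_mul_sq (ha : a ≠ 0) (R : ℝ) :
    ∫ x in (0 : ℝ)..R, x ^ (k + 2) * sin (a * x ^ 2) =
      -(R ^ (k + 1) * cos (a * R ^ 2)) / (2 * a) +
        (k + 1) / (2 * a) * ∫ x in (0 : ℝ)..R, x ^ k * cos (a * x ^ 2) := by
  have h := integral_eq_sub_of_hasDerivAt (a := 0) (b := R)
    (fun x _ => hasDerivAt_pow_succ_mul_cos_mul_sq k a x)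
    (by apply Continuous.intervalIntegrable; fun_prop)
  rw [integral_sub (by apply Continuous.intervalIntegrable; fun_prop)
      (by apply Continuous.intervalIntegrable; fun_prop),
    integral_const_mul, integral_const_mul, zero_pow k.succ_ne_zero, zero_mul, sub_zero] at h
  field_simp
  linear_combination -h

end IntegrationByParts

theorem integral_pow_mul_cos_le {k : ℕ} {R : ℝ} (hR : 0 ≤ R) (f : ℝ → ℝ) (hf : Continuous f) :
    ∫ x in (0 : ℝ)..R, x ^ k * cos (f x) ≤ R ^ (k + 1) / (k + 1) :=
  calc ∫ x in (0 : ℝ)..R, x ^ k * cos (f x) ≤ ∫ x in (0 : ℝ)..R, x ^ k := by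
        refine integral_mono_on hR (by apply Continuous.intervalIntegrable; fun_prop)
          (by apply Continuous.intervalIntegrable; fun_prop) fun x hx => ?_
        exact mul_le_of_le_one_right (pow_nonneg hx.1 k) (cos_le_one _)
    _ = R ^ (k + 1) / (k + 1) := by simp [integral_pow]

/-- Explicit lower bound for the oscillatory integral, by double integration by parts. -/
theorem oscillatory_integral_lower_bound
    (n : ℕ) (hn : 3 ≤ n) (R s : ℝ) (hR : 0 < R) (hs : 0 < s) :
    ∫ r in (0 : ℝ)..R, r ^ (n + 1) * Real.cos (2 * s * r ^ 2) ≥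
      (R ^ n / (4 * s)) * Real.sin (2 * s * R ^ 2) +
        ((n : ℝ) * R ^ (n - 2) / (16 * s ^ 2)) * Real.cos (2 * s * R ^ 2) -
          (n : ℝ) * R ^ (n - 2) / (16 * s ^ 2) := by
  obtain ⟨m, rfl⟩ : ∃ m, n = m + 3 := ⟨n - 3, by omega⟩
  have h2s : 2 * s ≠ 0 := by positivity
  rw [show m + 3 + 1 = m + 2 + 2 from rfl, integral_pow_mul_cos_mul_sq h2s,
    integral_pow_mul_sin_mul_sq h2s, show m + 3 - 2 = m + 1 from rfl]
  have hrem : ((m : ℝ) + 3) * (m + 1) / (16 * s ^ 2) *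
      ∫ x in (0 : ℝ)..R, x ^ m * cos (2 * s * x ^ 2) ≤ (m + 3) * R ^ (m + 1) / (16 * s ^ 2) :=
    calc _ ≤ ((m : ℝ) + 3) * (m + 1) / (16 * s ^ 2) * (R ^ (m + 1) / (m + 1)) := by
          gcongr
          exact integral_pow_mul_cos_le hR.le _ (by fun_prop)
      _ = _ := by field_simp
  push_cast
  linear_combination hrem
end

section
/- For every natural number n ≥ 3, as i → ∞ over the natural numbers, i^(-2) · ∫₀^{i^(2/(n+2))} r^(n+1) (1 + cos(2 i r²)) dr converges to 1/(n+2). -/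
/-!
Write `R = i ^ (2 / (n + 2))`, so that `R ^ (n + 2) = i ^ 2`. The non-oscillating part of the
integral is `R ^ (n + 2) / (n + 2) = i ^ 2 / (n + 2)`. In the oscillating part, integrating
`r ^ n · (r cos (2 i r²))` by parts gains a factor `1 / i`, which bounds it by `(n + 1) R ^ n / (4 i)`;
since `R ^ n ≤ i ^ 2`, after division by `i ^ 2` it is `O(1 / i)`.
-/

open Real Filter Topology intervalIntegral

theorem natCast_mul_pow_pred_mul_self (n : ℕ) (x : ℝ) : (n : ℝ) * x ^ (n - 1) * x = n * x ^ n := by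
  cases n with
  | zero => simp
  | succ k => rw [Nat.add_sub_cancel, pow_succ]; ring

theorem abs_integral_pow_mul_cos_mul_sq_le (n : ℕ) {a R : ℝ} (ha : 0 < a) (hR : 0 ≤ R) :
    |∫ r in (0 : ℝ)..R, r ^ (n + 1) * cos (a * r ^ 2)| ≤ (n + 1) * R ^ n / (2 * a) := by
  set v : ℝ → ℝ := fun r => sin (a * r ^ 2) / (2 * a)
  have hv_bound : ∀ r, |v r| ≤ 1 / (2 * a) := fun r => by
    rw [abs_div, abs_of_pos (by positivity : 0 < 2 * a)]
    gcongr
    exact abs_sin_le_one _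
  have hv : ∀ r, HasDerivAt v (r * cos (a * r ^ 2)) r := fun r => by
    have := (((hasDerivAt_pow 2 r).const_mul a).sin).div_const (2 * a)
    refine this.congr_deriv ?_
    field_simp
    ring
  have hparts : ∫ r in (0 : ℝ)..R, r ^ (n + 1) * cos (a * r ^ 2) =
      R ^ n * v R - ∫ r in (0 : ℝ)..R, (n * r ^ (n - 1)) * v r := by
    have := integral_mul_deriv_eq_deriv_mul (a := 0) (b := R)
      (fun r _ => hasDerivAt_pow n r) (fun r _ => hv r)
      (by apply Continuous.intervalIntegrable; fun_prop)
      (by apply Continuous.intervalIntegrable; fun_prop)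
    simp only [v, ne_eq, OfNat.ofNat_ne_zero, not_false_eq_true, zero_pow, mul_zero,
      sin_zero, zero_div, sub_zero] at this
    rw [← this]
    congr 1 with r
    ring
  have hrest : |∫ r in (0 : ℝ)..R, (n * r ^ (n - 1)) * v r| ≤ n * R ^ n / (2 * a) := by
    have h := norm_integral_le_of_norm_le_const (a := 0) (b := R)
      (f := fun r => (n * r ^ (n - 1)) * v r) (C := n * R ^ (n - 1) * (1 / (2 * a)))
      fun r hr => by
        rw [Set.uIoc_of_le hR] at hr
        rw [norm_mul, Real.norm_eq_abs, Real.norm_eq_abs,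
          abs_of_nonneg (by have := hr.1.le; positivity)]
        gcongr
        · exact hr.1.le
        · exact hr.2
        · exact hv_bound r
    rw [Real.norm_eq_abs, sub_zero, abs_of_nonneg hR] at h
    calc _ ≤ _ := h
      _ = n * R ^ n / (2 * a) := by rw [← natCast_mul_pow_pred_mul_self n R]; ring
  have hboundary : |R ^ n * v R| ≤ R ^ n / (2 * a) := by
    rw [abs_mul, abs_of_nonneg (by positivity)]
    calc _ ≤ R ^ n * (1 / (2 * a)) := by gcongr; exact hv_bound R
      _ = _ := by ring
  rw [hparts]
  calc _ ≤ |R ^ n * v R| + |∫ r in (0 : ℝ)..R, (n * r ^ (n - 1)) * v r| := abs_sub _ _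
    _ ≤ R ^ n / (2 * a) + n * R ^ n / (2 * a) := add_le_add hboundary hrest
    _ = _ := by ring

theorem integral_pow_mul_one_add_cos (n : ℕ) (a R : ℝ) :
    ∫ r in (0 : ℝ)..R, r ^ (n + 1) * (1 + cos (a * r ^ 2)) =
      R ^ (n + 2) / (n + 2) + ∫ r in (0 : ℝ)..R, r ^ (n + 1) * cos (a * r ^ 2) := by
  simp_rw [mul_one_add]
  rw [integral_add (by apply Continuous.intervalIntegrable; fun_prop)
    (by apply Continuous.intervalIntegrable; fun_prop), integral_pow]
  rw [zero_pow (by omega), sub_zero]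
  push_cast
  ring

theorem abs_inv_sq_mul_integral_pow_mul_one_add_cos_sub_le (n : ℕ) {I R : ℝ} (hI : 0 < I)
    (hR : 1 ≤ R) (hRI : R ^ (n + 2) = I ^ 2) :
    |(I ^ 2)⁻¹ * (∫ r in (0 : ℝ)..R, r ^ (n + 1) * (1 + cos (2 * I * r ^ 2))) - 1 / (n + 2)| ≤
      (n + 1) / 4 / I := by
  have hmain : (I ^ 2)⁻¹ * (I ^ 2 / (n + 2)) = 1 / (n + 2) := by field_simp
  rw [integral_pow_mul_one_add_cos, hRI, mul_add, hmain, add_sub_cancel_left, abs_mul, abs_of_pos (by positivity)]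
  have hRn : R ^ n ≤ I ^ 2 := hRI ▸ pow_le_pow_right₀ hR (by omega)
  calc _ ≤ (I ^ 2)⁻¹ * ((n + 1) * R ^ n / (2 * (2 * I))) :=
        by gcongr; exact abs_integral_pow_mul_cos_mul_sq_le n (by positivity) (by positivity)
    _ ≤ (I ^ 2)⁻¹ * ((n + 1) * I ^ 2 / (2 * (2 * I))) := by gcongr
    _ = _ := by field_simp; ring

theorem rpow_div_natCast_pow {x : ℝ} (hx : 0 ≤ x) (y : ℝ) {m : ℕ} (hm : m ≠ 0) :
    (x ^ (y / m)) ^ m = x ^ y := by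
  rw [← rpow_natCast, ← rpow_mul hx, div_mul_cancel₀ _ (by exact_mod_cast hm)]

open Filter in
theorem growing_ball_oscillatory_limit_general
    (n : ℕ) :
    Tendsto
      (fun i : ℕ =>
        ((i : ℝ) ^ 2)⁻¹ *
          ∫ r in (0 : ℝ)..((i : ℝ) ^ ((2 : ℝ) / ((n : ℝ) + 2))),
            r ^ (n + 1) * (1 + Real.cos (2 * (i : ℝ) * r ^ 2)))
      atTop (nhds (1 / ((n : ℝ) + 2))) := by
  rw [tendsto_iff_norm_sub_tendsto_zero]
  refine squeeze_zero' (.of_forall fun _ => norm_nonneg _) ?_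
    (tendsto_const_div_atTop_nhds_zero_nat (((n : ℝ) + 1) / 4))
  filter_upwards [eventually_ge_atTop 1] with i hi
  have hI : (1 : ℝ) ≤ i := by exact_mod_cast hi
  refine abs_inv_sq_mul_integral_pow_mul_one_add_cos_sub_le n (by positivity)
    (one_le_rpow hI (by positivity)) ?_
  have h := rpow_div_natCast_pow (by positivity : (0 : ℝ) ≤ i) 2 (m := n + 2) (by omega)
  push_cast at h
  rw [h, rpow_two]

open Filter in
/-- Limit of `i⁻² ∫₀^{i^(2/(n+2))} r^(n+1) (1 + cos(2 i r²)) dr`. -/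
theorem growing_ball_oscillatory_limit
    (n : ℕ) (hn : 3 ≤ n) :
    Tendsto
      (fun i : ℕ =>
        ((i : ℝ) ^ 2)⁻¹ *
          ∫ r in (0 : ℝ)..((i : ℝ) ^ ((2 : ℝ) / ((n : ℝ) + 2))),
            r ^ (n + 1) * (1 + Real.cos (2 * (i : ℝ) * r ^ 2)))
      atTop (nhds (1 / ((n : ℝ) + 2))) :=
  growing_ball_oscillatory_limit_general n
end

section
/- Let a, b ∈ ℝ and define f : ℝ² → ℝ by f(x, y) = e^(a(x² + y²)) · sin(b(x² + y²)). Then f is smooth, and its Laplacian Δf = ∂²f/∂x² + ∂²f/∂y² is given at every point (x, y), writing ρ² = x² + y², by Δf(x, y) = e^(a ρ²) · [ (4a + 4(a² - b²) ρ²) · sin(b ρ²) + (4b + 8 a b ρ²) · cos(b ρ²) ]. -/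
private lemma aux_hd1 (a b c t : ℝ) :
    HasDerivAt (fun s : ℝ => Real.exp (a * (s ^ 2 + c)) * Real.sin (b * (s ^ 2 + c)))
      (Real.exp (a * (t ^ 2 + c)) *
        ((2 * a * t) * Real.sin (b * (t ^ 2 + c)) + (2 * b * t) * Real.cos (b * (t ^ 2 + c)))) t := by
  have hq : HasDerivAt (fun s : ℝ => s ^ 2 + c) (2 * t) t := by
    simpa using (hasDerivAt_pow 2 t).add_const c
  have hu : HasDerivAt (fun s : ℝ => a * (s ^ 2 + c)) (a * (2 * t)) t := hq.const_mul a
  have hv : HasDerivAt (fun s : ℝ => b * (s ^ 2 + c)) (b * (2 * t)) t := hq.const_mul b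
  have he := hu.exp
  have hs := hv.sin
  have := he.mul hs
  exact this.congr_deriv (by ring)

private lemma aux_hd2 (a b c t : ℝ) :
    HasDerivAt (fun s : ℝ => Real.exp (a * (s ^ 2 + c)) *
        ((2 * a * s) * Real.sin (b * (s ^ 2 + c)) + (2 * b * s) * Real.cos (b * (s ^ 2 + c))))
      (Real.exp (a * (t ^ 2 + c)) *
        ((2 * a + 4 * (a ^ 2 - b ^ 2) * t ^ 2) * Real.sin (b * (t ^ 2 + c)) +
          (2 * b + 8 * a * b * t ^ 2) * Real.cos (b * (t ^ 2 + c)))) t := by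
  have hq : HasDerivAt (fun s : ℝ => s ^ 2 + c) (2 * t) t := by
    simpa using (hasDerivAt_pow 2 t).add_const c
  have hu : HasDerivAt (fun s : ℝ => a * (s ^ 2 + c)) (a * (2 * t)) t := hq.const_mul a
  have hv : HasDerivAt (fun s : ℝ => b * (s ^ 2 + c)) (b * (2 * t)) t := hq.const_mul b
  have he := hu.exp
  have hs := hv.sin
  have hc := hv.cos
  have h1 : HasDerivAt (fun s : ℝ => (2 * a * s) * Real.sin (b * (s ^ 2 + c)))
      ((2 * a) * Real.sin (b * (t ^ 2 + c)) + (2 * a * t) * (Real.cos (b * (t ^ 2 + c)) * (b * (2 * t)))) t := by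
    have := ((hasDerivAt_id t).const_mul (2 * a)).mul hs
    simpa [mul_comm, mul_assoc, mul_left_comm, Pi.mul_def] using this
  have h2 : HasDerivAt (fun s : ℝ => (2 * b * s) * Real.cos (b * (s ^ 2 + c)))
      ((2 * b) * Real.cos (b * (t ^ 2 + c)) + (2 * b * t) * (-Real.sin (b * (t ^ 2 + c)) * (b * (2 * t)))) t := by
    have := ((hasDerivAt_id t).const_mul (2 * b)).mul hc
    simpa [mul_comm, mul_assoc, mul_left_comm, Pi.mul_def] using this
  have := he.mul (h1.add h2)
  exact this.congr_deriv (by simp only [Pi.add_apply]; ring)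

/-- Explicit Laplacian of `f(x,y) = e^(a ρ²) sin(b ρ²)`, `ρ² = x² + y²`, on `ℝ²`. -/
theorem laplacian_exp_sin_radial
    (a b : ℝ) (f : ℝ × ℝ → ℝ)
    (hf : ∀ p : ℝ × ℝ, f p = Real.exp (a * (p.1 ^ 2 + p.2 ^ 2)) *
      Real.sin (b * (p.1 ^ 2 + p.2 ^ 2))) :
    ContDiff ℝ (⊤ : ℕ∞) f ∧
      ∀ x y : ℝ,
        deriv (deriv (fun t : ℝ => f (t, y))) x + deriv (deriv (fun t : ℝ => f (x, t))) y =
          Real.exp (a * (x ^ 2 + y ^ 2)) *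
            ((4 * a + 4 * (a ^ 2 - b ^ 2) * (x ^ 2 + y ^ 2)) * Real.sin (b * (x ^ 2 + y ^ 2)) +
              (4 * b + 8 * a * b * (x ^ 2 + y ^ 2)) * Real.cos (b * (x ^ 2 + y ^ 2))) := by
  have hfe : f = fun p : ℝ × ℝ => Real.exp (a * (p.1 ^ 2 + p.2 ^ 2)) *
      Real.sin (b * (p.1 ^ 2 + p.2 ^ 2)) := funext hf
  constructor
  · rw [hfe]
    have h1 : ContDiff ℝ (⊤ : ℕ∞) (fun p : ℝ × ℝ => p.1 ^ 2 + p.2 ^ 2) :=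
      (contDiff_fst.pow 2).add (contDiff_snd.pow 2)
    exact (Real.contDiff_exp.comp ((contDiff_const.mul h1))).mul
      (Real.contDiff_sin.comp (contDiff_const.mul h1))
  · intro x y
    -- second derivative in one variable at point t with constant c
    have key : ∀ c t : ℝ,
        deriv (deriv (fun s : ℝ => Real.exp (a * (s ^ 2 + c)) * Real.sin (b * (s ^ 2 + c)))) t =
          Real.exp (a * (t ^ 2 + c)) *
            ((2 * a + 4 * (a ^ 2 - b ^ 2) * t ^ 2) * Real.sin (b * (t ^ 2 + c)) +
              (2 * b + 8 * a * b * t ^ 2) * Real.cos (b * (t ^ 2 + c))) := by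
      intro c t
      have hd : deriv (fun s : ℝ => Real.exp (a * (s ^ 2 + c)) * Real.sin (b * (s ^ 2 + c))) =
          fun s : ℝ => Real.exp (a * (s ^ 2 + c)) *
            ((2 * a * s) * Real.sin (b * (s ^ 2 + c)) + (2 * b * s) * Real.cos (b * (s ^ 2 + c))) :=
        funext fun s => (aux_hd1 a b c s).deriv
      rw [hd]
      exact (aux_hd2 a b c t).deriv
    have e1 : (fun t : ℝ => f (t, y)) =
        fun t : ℝ => Real.exp (a * (t ^ 2 + y ^ 2)) * Real.sin (b * (t ^ 2 + y ^ 2)) := by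
      funext t; rw [hf]
    have e2 : (fun t : ℝ => f (x, t)) =
        fun t : ℝ => Real.exp (a * (t ^ 2 + x ^ 2)) * Real.sin (b * (t ^ 2 + x ^ 2)) := by
      funext t; rw [hf]; ring_nf
    rw [e1, e2, key (y ^ 2) x, key (x ^ 2) y]
    have h : y ^ 2 + x ^ 2 = x ^ 2 + y ^ 2 := by ring
    rw [h]
    ring
end
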